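/- Let l > 0 and a, b ≥ 0. Define x = artanh(sinh(l/2)·sinh(a) / (cosh(b) + cosh(l/2)·cosh(a))) and y = artanh(sinh(l/2)·sinh(b) / (cosh(a) + cosh(l/2)·cosh(b))). Then tanh(x + y) = sinh(l/2)·sinh(a+b) / (1 + cosh(l/2)·cosh(a+b)). -/

import Mathlib

open Real

/-! By the addition formula, `tanh (x + y) = (u + v) / (1 + u v)` with `u = tanh x` and
`v = tanh y` the two given quotients, which lie in `(-1, 1)` because
`|sinh (l/2) sinh a| < cosh (l/2) cosh a`. Over the common denominator, `u + v` and `1 + u v`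
share the factor `cosh (l/2) + cosh (a - b)`; cancelling it leaves the right-hand side. -/

/-- The real inverse hyperbolic tangent. -/
noncomputable def artanh (x : ℝ) : ℝ := (1/2) * Real.log ((1 + x) / (1 - x))

theorem Real.tanh_add (x y : ℝ) : tanh (x + y) = (tanh x + tanh y) / (1 + tanh x * tanh y) := by
  have hx := (cosh_pos x).ne'
  have hy := (cosh_pos y).ne'
  simp only [tanh_eq_sinh_div_cosh, sinh_add, cosh_add]
  field_simp

theorem tanh_artanh_of_abs_lt_one {u : ℝ} (hu : |u| < 1) : tanh (_root_.artanh u) = u := by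
  have hu' : u ∈ Set.Ioo (-1) 1 := abs_lt.mp hu
  rw [_root_.artanh, ← Real.artanh_eq_half_log (Set.Ioo_subset_Icc_self hu'), Real.tanh_artanh hu']

theorem abs_sinh_mul_sinh_lt_cosh_mul_cosh (x y : ℝ) : |sinh x * sinh y| < cosh x * cosh y := by
  have hx := cosh_sq x
  have hy := cosh_sq y
  have hx1 := one_le_cosh x
  have hy1 := one_le_cosh y
  apply abs_lt_of_sq_lt_sq _ (by positivity)
  nlinarith

noncomputable def gapTanh (L a b : ℝ) : ℝ := sinh L * sinh a / (cosh b + cosh L * cosh a)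

section gapTanh

variable (L a b : ℝ)

theorem abs_gapTanh_lt_one : |gapTanh L a b| < 1 := by
  have hd : 0 < cosh b + cosh L * cosh a := by positivity
  rw [gapTanh, abs_div, abs_of_pos hd, div_lt_one hd]
  linarith [abs_sinh_mul_sinh_lt_cosh_mul_cosh L a, cosh_pos b]

theorem gapTanh_add_gapTanh :
    gapTanh L a b + gapTanh L b a = sinh L * sinh (a + b) * (cosh L + cosh (a - b)) /
      ((cosh b + cosh L * cosh a) * (cosh a + cosh L * cosh b)) := by
  have h1 : cosh b + cosh L * cosh a ≠ 0 := by positivity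
  have h2 : cosh a + cosh L * cosh b ≠ 0 := by positivity
  rw [gapTanh, gapTanh, div_add_div _ _ h1 h2, sinh_add, cosh_sub]
  congr 1
  linear_combination -(sinh L * sinh a * cosh a) * cosh_sq_sub_sinh_sq b
    - (sinh L * sinh b * cosh b) * cosh_sq_sub_sinh_sq a

theorem one_add_gapTanh_mul_gapTanh :
    1 + gapTanh L a b * gapTanh L b a = (1 + cosh L * cosh (a + b)) * (cosh L + cosh (a - b)) /
      ((cosh b + cosh L * cosh a) * (cosh a + cosh L * cosh b)) := by
  have h1 : cosh b + cosh L * cosh a ≠ 0 := by positivity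
  have h2 : cosh a + cosh L * cosh b ≠ 0 := by positivity
  rw [gapTanh, gapTanh, div_mul_div_comm, one_add_div (mul_ne_zero h1 h2), cosh_add, cosh_sub]
  congr 1
  linear_combination -(sinh a * sinh b) * cosh_sq_sub_sinh_sq L
    - cosh L * (cosh b ^ 2 - 1) * cosh_sq_sub_sinh_sq a - cosh L * sinh a ^ 2 * cosh_sq_sub_sinh_sq b

theorem tanh_artanh_gapTanh : tanh (_root_.artanh (gapTanh L a b)) = gapTanh L a b :=
  tanh_artanh_of_abs_lt_one (abs_gapTanh_lt_one L a b)

end gapTanh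

theorem tanh_add_gap_boundary_geodesic_general (l a b x y : ℝ)
    (hx : x = _root_.artanh (Real.sinh (l/2) * Real.sinh a /
      (Real.cosh b + Real.cosh (l/2) * Real.cosh a)))
    (hy : y = _root_.artanh (Real.sinh (l/2) * Real.sinh b /
      (Real.cosh a + Real.cosh (l/2) * Real.cosh b))) :
    Real.tanh (x + y) = Real.sinh (l/2) * Real.sinh (a + b) /
      (1 + Real.cosh (l/2) * Real.cosh (a + b)) := by
  have htx : tanh x = gapTanh (l/2) a b := hx ▸ tanh_artanh_gapTanh _ _ _
  have hty : tanh y = gapTanh (l/2) b a := hy ▸ tanh_artanh_gapTanh _ _ _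
  have hcommon : cosh (l/2) + cosh (a - b) ≠ 0 := by positivity
  have hdenom : (cosh b + cosh (l/2) * cosh a) * (cosh a + cosh (l/2) * cosh b) ≠ 0 := by
    positivity
  rw [tanh_add, htx, hty, gapTanh_add_gapTanh,
    one_add_gapTanh_mul_gapTanh, div_div_div_cancel_right₀ hdenom, mul_div_mul_right _ _ hcommon]

theorem tanh_add_gap_boundary_geodesic (l a b x y : ℝ)
    (hl : 0 < l) (ha : 0 ≤ a) (hb : 0 ≤ b)
    (hx : x = _root_.artanh (Real.sinh (l/2) * Real.sinh a /
      (Real.cosh b + Real.cosh (l/2) * Real.cosh a)))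
    (hy : y = _root_.artanh (Real.sinh (l/2) * Real.sinh b /
      (Real.cosh a + Real.cosh (l/2) * Real.cosh b))) :
    Real.tanh (x + y) = Real.sinh (l/2) * Real.sinh (a + b) /
      (1 + Real.cosh (l/2) * Real.cosh (a + b)) :=
  tanh_add_gap_boundary_geodesic_general l a b x y hx hy
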